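/- The second moment of the normalized autocorrelation of Eulerian numbers equals (n+1)/6: that is, ∑_i i^2 * (∑_p A(n,p)*A(n,p-i)) / (∑_p A(n,p))^2 = (n+1)/6. -/

import Mathlib

/-!
Write `A(n,p)` as the number of permutations of `Fin n` with `p` ascents. Then the numerator is
`∑_{σ,τ} (asc σ - asc τ)²`, i.e. `2 (n!)²` times the variance of the number of ascents.
With `εᵢ = ±1` the sign of `σ(i+1) - σ(i)`, we have `2 asc = (n - 1) + ∑ εᵢ`. Relabelling by a
transposition or a 3-cycle shows that the `εᵢ` have mean `0`, that non-adjacent ones are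
uncorrelated, and that `E[εᵢ εᵢ₊₁] = -1/3`. Hence `E[(∑ εᵢ)²] = (n - 1) - 2(n - 2)/3 = (n + 1)/3`
and the variance of `asc` is `(n + 1)/12`.
-/

/-- The Eulerian number `A(n,q)`: the number of permutations of `{1,...,n}`
with exactly `q` ascents.  (In particular `A(n,q) = 0` unless `0 ≤ q < n`.) -/
def eulerian (n q : ℕ) : ℕ :=
  (Finset.univ.filter fun σ : Equiv.Perm (Fin n) =>
    (Finset.univ.filter fun i : Fin n =>
      ∃ j : Fin n, (j : ℕ) = (i : ℕ) + 1 ∧ σ i < σ j).card = q).card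

/-- The Eulerian number extended to integer arguments, vanishing for negative
arguments (so `A(n,q) = 0` unless `0 ≤ q < n`). -/
def eulerianZ (n : ℕ) (q : ℤ) : ℕ := if 0 ≤ q then eulerian n q.toNat else 0

open Finset Equiv Nat

theorem sum_natCast_card_fiber_mul {ι κ R : Type*} [Fintype ι] [DecidableEq κ]
    [NonAssocSemiring R] {g : ι → κ} {t : Finset κ} (h : ∀ i, g i ∈ t) (f : κ → R) :
    ∑ j ∈ t, (#{i | g i = j} : R) * f j = ∑ i, f (g i) := by
  rw [← sum_fiberwise_of_maps_to' (fun i _ => h i) f]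
  simp only [sum_const, nsmul_eq_mul]

theorem sum_sum_sub_sq {ι R : Type*} [Fintype ι] [CommRing R] (f : ι → R) :
    ∑ x, ∑ y, (f x - f y) ^ 2 =
      2 * Fintype.card ι * ∑ x, f x ^ 2 - 2 * (∑ x, f x) ^ 2 := by
  simp only [sub_sq, sum_add_distrib, sum_sub_distrib, ← mul_sum, ← sum_mul, sum_const,
    nsmul_eq_mul, Finset.card_univ]
  ring

theorem sum_range_tridiagonal {R : Type*} [CommRing R] (a b : R) (m : ℕ) :
    ∑ i ∈ range (m + 1), ∑ j ∈ range (m + 1),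
      (if i = j then a else if i = j + 1 ∨ j = i + 1 then b else 0) =
      (m + 1) * a + 2 * m * b := by
  induction m with
  | zero => simp
  | succ m ih =>
    have hcol : ∑ i ∈ range (m + 1),
        (if i = m + 1 then a else if i = m + 1 + 1 ∨ m + 1 = i + 1 then b else 0) = b := by
      rw [sum_range_succ, sum_eq_zero fun i hi => by
        simp only [mem_range] at hi; simp (disch := omega) [if_neg]]
      simp
    have hrow : ∑ j ∈ range (m + 1),
        (if m + 1 = j then a else if m + 1 = j + 1 ∨ j = m + 1 + 1 then b else 0) = b := by
      rw [sum_range_succ, sum_eq_zero fun j hj => by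
        simp only [mem_range] at hj; simp (disch := omega) [if_neg]]
      simp
    simp only [sum_range_succ (n := m + 1), sum_add_distrib, ih, hcol, hrow, ↓reduceIte]
    push_cast
    ring

variable {n : ℕ}

def numAscents (σ : Perm (Fin n)) : ℕ :=
  #{i : Fin n | ∃ j : Fin n, (j : ℕ) = (i : ℕ) + 1 ∧ σ i < σ j}

theorem eulerian_eq_card (n q : ℕ) :
    eulerian n q = #{σ : Perm (Fin n) | numAscents σ = q} := rfl

theorem eulerianZ_eq_card (n : ℕ) (q : ℤ) :
    eulerianZ n q = #{σ : Perm (Fin n) | (numAscents σ : ℤ) = q} := by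
  unfold eulerianZ
  split_ifs with hq
  · rw [eulerian_eq_card]
    congr 1
    exact filter_congr fun σ _ => by omega
  · refine (card_eq_zero.2 (filter_eq_empty_iff.2 fun σ _ => ?_)).symm
    omega

theorem numAscents_le (σ : Perm (Fin n)) : numAscents σ ≤ n :=
  (card_filter_le _ _).trans_eq (card_fin n)

theorem numAscents_eq_card_castSucc {m : ℕ} (σ : Perm (Fin (m + 1))) :
    numAscents σ = #{i : Fin m | σ i.castSucc < σ i.succ} := by
  have hlast :
      ¬∃ j : Fin (m + 1), (j : ℕ) = (Fin.last m : ℕ) + 1 ∧ σ (Fin.last m) < σ j :=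
    fun ⟨j, hj, _⟩ => by simp only [Fin.val_last] at hj; omega
  have hsucc (i : Fin m) : (∃ j : Fin (m + 1), (j : ℕ) = (i.castSucc : ℕ) + 1 ∧
      σ i.castSucc < σ j) ↔ σ i.castSucc < σ i.succ :=
    ⟨fun ⟨j, hj, hlt⟩ => by rwa [show j = i.succ from Fin.ext hj] at hlt,
      fun h => ⟨i.succ, rfl, h⟩⟩
  simp only [numAscents, card_filter, Fin.sum_univ_castSucc, hlast, hsucc, if_false, add_zero]

theorem numAscents_lt (hn : 0 < n) (σ : Perm (Fin n)) : numAscents σ < n := by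
  obtain ⟨m, rfl⟩ : ∃ m, n = m + 1 := ⟨n - 1, by omega⟩
  rw [numAscents_eq_card_castSucc]
  exact Nat.lt_succ_of_le ((card_filter_le _ _).trans_eq (card_fin m))

theorem sum_range_eulerian (hn : 0 < n) : ∑ p ∈ range n, eulerian n p = n ! := by
  simp only [eulerian_eq_card]
  rw [← card_eq_sum_card_fiberwise fun σ _ => mem_range.2 (numAscents_lt hn σ),
    Finset.card_univ, Fintype.card_perm, Fintype.card_fin]

theorem autocorrelation_moment_eq_sum_sum_sq (n : ℕ) :
    ∑ i ∈ Icc (-(n : ℤ)) n, (i : ℚ) ^ 2 *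
        ∑ p ∈ Icc (-(n : ℤ)) n, (eulerianZ n p : ℚ) * (eulerianZ n (p - i) : ℚ) =
      ((∑ σ : Perm (Fin n), ∑ τ : Perm (Fin n),
        ((numAscents σ : ℤ) - numAscents τ) ^ 2 : ℤ) : ℚ) := by
  have hmem (σ : Perm (Fin n)) : (numAscents σ : ℤ) ∈ Icc (-(n : ℤ)) n := by
    have := numAscents_le σ
    simp only [mem_Icc]; omega
  have hsub (σ τ : Perm (Fin n)) :
      (numAscents σ : ℤ) - numAscents τ ∈ Icc (-(n : ℤ)) n := by
    have := numAscents_le σ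
    have := numAscents_le τ
    simp only [mem_Icc]; omega
  calc _ = ∑ i ∈ Icc (-(n : ℤ)) n, (i : ℚ) ^ 2 * ∑ σ : Perm (Fin n),
          (#{τ : Perm (Fin n) | (numAscents σ : ℤ) - numAscents τ = i} : ℚ) := by
        refine sum_congr rfl fun i _ => ?_
        simp only [eulerianZ_eq_card]
        rw [sum_natCast_card_fiber_mul hmem]
        refine congrArg _ (sum_congr rfl fun σ _ => ?_)
        congr 2
        exact filter_congr fun τ _ => by omega
    _ = ∑ σ : Perm (Fin n), ∑ i ∈ Icc (-(n : ℤ)) n,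
          (#{τ : Perm (Fin n) | (numAscents σ : ℤ) - numAscents τ = i} : ℚ) * (i : ℚ) ^ 2 := by
        simp only [mul_sum]
        rw [sum_comm]
        simp only [mul_comm]
    _ = _ := by
        simp only [Int.cast_sum, Int.cast_pow]
        exact sum_congr rfl fun σ _ =>
          sum_natCast_card_fiber_mul (hsub σ) fun i : ℤ => (i : ℚ) ^ 2

def ascentSign (σ : Perm (Fin n)) (a b : Fin n) : ℤ := if σ a < σ b then 1 else -1

theorem ascentSign_mul_apply (σ π : Perm (Fin n)) (a b : Fin n) :
    ascentSign (σ * π) a b = ascentSign σ (π a) (π b) := rfl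

theorem ascentSign_comm (σ : Perm (Fin n)) {a b : Fin n} (hab : a ≠ b) :
    ascentSign σ b a = -ascentSign σ a b := by
  have : σ a ≠ σ b := σ.injective.ne hab
  unfold ascentSign
  split_ifs <;> first | rfl | omega

theorem ascentSign_mul_self (σ : Perm (Fin n)) (a b : Fin n) :
    ascentSign σ a b * ascentSign σ a b = 1 := by
  unfold ascentSign
  split_ifs <;> rfl

theorem sum_ascentSign {a b : Fin n} (hab : a ≠ b) :
    ∑ σ : Perm (Fin n), ascentSign σ a b = 0 := by
  have h := Equiv.sum_comp (Equiv.mulRight (swap a b)) fun σ => ascentSign σ a b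
  simp only [coe_mulRight, ascentSign_mul_apply, swap_apply_left, swap_apply_right,
    ascentSign_comm _ hab, sum_neg_distrib] at h
  linarith

theorem sum_ascentSign_mul_of_disjoint {a b c d : Fin n} (hcd : c ≠ d)
    (hac : a ≠ c) (had : a ≠ d) (hbc : b ≠ c) (hbd : b ≠ d) :
    ∑ σ : Perm (Fin n), ascentSign σ a b * ascentSign σ c d = 0 := by
  have h := Equiv.sum_comp (Equiv.mulRight (swap c d)) fun σ =>
    ascentSign σ a b * ascentSign σ c d
  simp only [coe_mulRight, ascentSign_mul_apply, swap_apply_left, swap_apply_right,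
    swap_apply_of_ne_of_ne hac had, swap_apply_of_ne_of_ne hbc hbd, ascentSign_comm _ hcd,
    mul_neg, sum_neg_distrib] at h
  linarith

theorem three_mul_sum_ascentSign_mul_chain {a b c : Fin n} (hab : a ≠ b) (hbc : b ≠ c)
    (hac : a ≠ c) :
    3 * ∑ σ : Perm (Fin n), ascentSign σ a b * ascentSign σ b c = -n ! := by
  -- the 3-cycle `a ↦ b ↦ c ↦ a` permutes the three cyclic products below
  set π := swap a c * swap a b
  have hπa : π a = b := by simp [π, swap_apply_of_ne_of_ne hab.symm hbc]
  have hπb : π b = c := by simp [π]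
  have hπc : π c = a := by simp [π, swap_apply_of_ne_of_ne hac.symm hbc.symm]
  have h₁ := Equiv.sum_comp (Equiv.mulRight π) fun σ => ascentSign σ a b * ascentSign σ b c
  have h₂ := Equiv.sum_comp (Equiv.mulRight π) fun σ => ascentSign σ b c * ascentSign σ c a
  simp only [coe_mulRight, ascentSign_mul_apply, hπa, hπb, hπc] at h₁ h₂
  have hcycle : ∀ σ : Perm (Fin n), ascentSign σ a b * ascentSign σ b c
      + ascentSign σ b c * ascentSign σ c a + ascentSign σ c a * ascentSign σ a b = -1 := by
    intro σ
    have := σ.injective.ne hab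
    have := σ.injective.ne hbc
    have := σ.injective.ne hac
    unfold ascentSign
    split_ifs <;> first | rfl | omega
  have hsum := sum_congr rfl fun σ (_ : σ ∈ univ) => hcycle σ
  simp only [sum_add_distrib, sum_const, Finset.card_univ, Fintype.card_perm, Fintype.card_fin,
    smul_neg, nsmul_one] at hsum
  linarith

section Adjacent

variable {m : ℕ}

def ascentSignSum (σ : Perm (Fin (m + 1))) : ℤ := ∑ i : Fin m, ascentSign σ i.castSucc i.succ

theorem two_mul_numAscents (σ : Perm (Fin (m + 1))) :
    2 * (numAscents σ : ℤ) = ascentSignSum σ + m := by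
  have hterm (i : Fin m) : 2 * (if σ i.castSucc < σ i.succ then 1 else 0 : ℤ) =
      ascentSign σ i.castSucc i.succ + 1 := by
    unfold ascentSign
    split_ifs <;> rfl
  rw [numAscents_eq_card_castSucc, card_filter, ascentSignSum]
  push_cast
  rw [mul_sum, sum_congr rfl fun i _ => hterm i, sum_add_distrib]
  simp

theorem sum_ascentSignSum : ∑ σ : Perm (Fin (m + 1)), ascentSignSum σ = 0 := by
  simp only [ascentSignSum]
  rw [sum_comm]
  exact sum_eq_zero fun i _ => sum_ascentSign Fin.castSucc_lt_succ.ne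

theorem three_mul_sum_ascentSign_mul (i j : Fin m) :
    3 * ∑ σ : Perm (Fin (m + 1)),
        ascentSign σ i.castSucc i.succ * ascentSign σ j.castSucc j.succ =
      if (i : ℕ) = j then (3 * (m + 1)! : ℤ) else
        if (i : ℕ) = j + 1 ∨ (j : ℕ) = i + 1 then -((m + 1)! : ℤ) else 0 := by
  split_ifs with hij hadj
  · obtain rfl := Fin.ext hij
    simp [ascentSign_mul_self, Fintype.card_perm]
  · rcases hadj with h | h
    · have hji : j.succ = i.castSucc := Fin.ext (by simp; omega)
      simp only [← hji, mul_comm (ascentSign _ j.succ i.succ)]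
      refine three_mul_sum_ascentSign_mul_chain ?_ ?_ ?_ <;> simp [Fin.ext_iff] <;> omega
    · have hij' : i.succ = j.castSucc := Fin.ext (by simp; omega)
      simp only [← hij']
      refine three_mul_sum_ascentSign_mul_chain ?_ ?_ ?_ <;> simp [Fin.ext_iff] <;> omega
  · rw [sum_ascentSign_mul_of_disjoint, mul_zero] <;> simp [Fin.ext_iff] <;> omega

theorem three_mul_sum_ascentSignSum_sq (hm : 0 < m) :
    3 * ∑ σ : Perm (Fin (m + 1)), ascentSignSum σ ^ 2 = (m + 2) * (m + 1)! := by
  obtain ⟨k, rfl⟩ : ∃ k, m = k + 1 := ⟨m - 1, by omega⟩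
  calc _ = ∑ i : Fin (k + 1), ∑ j : Fin (k + 1), 3 * ∑ σ : Perm (Fin (k + 2)),
          ascentSign σ i.castSucc i.succ * ascentSign σ j.castSucc j.succ := by
        simp only [ascentSignSum, sq, sum_mul_sum]
        simp only [mul_sum]
        rw [sum_comm]
        exact sum_congr rfl fun i _ => sum_comm
    _ = ∑ i ∈ range (k + 1), ∑ j ∈ range (k + 1), (if i = j then (3 * (k + 2)! : ℤ) else
          if i = j + 1 ∨ j = i + 1 then -((k + 2)! : ℤ) else 0) := by
        simp only [three_mul_sum_ascentSign_mul, ← Fin.sum_univ_eq_sum_range]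
    _ = _ := by
        rw [sum_range_tridiagonal]
        push_cast
        ring

theorem six_mul_sum_sum_numAscents_sub_sq (hm : 0 < m) :
    6 * ∑ σ : Perm (Fin (m + 1)), ∑ τ : Perm (Fin (m + 1)),
        ((numAscents σ : ℤ) - numAscents τ) ^ 2 = (m + 2) * ((m + 1)! : ℤ) ^ 2 := by
  have hsq : 4 * ∑ σ : Perm (Fin (m + 1)), ∑ τ : Perm (Fin (m + 1)),
      ((numAscents σ : ℤ) - numAscents τ) ^ 2 =
      ∑ σ : Perm (Fin (m + 1)), ∑ τ : Perm (Fin (m + 1)),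
        (ascentSignSum σ - ascentSignSum τ) ^ 2 := by
    simp only [mul_sum]
    refine sum_congr rfl fun σ _ => sum_congr rfl fun τ _ => ?_
    linear_combination (2 * (numAscents σ : ℤ) - 2 * numAscents τ + ascentSignSum σ -
      ascentSignSum τ) * (two_mul_numAscents σ - two_mul_numAscents τ)
  rw [sum_sum_sub_sq (ascentSignSum (m := m)), sum_ascentSignSum, Fintype.card_perm,
    Fintype.card_fin] at hsq
  have h3 := three_mul_sum_ascentSignSum_sq hm
  refine mul_left_cancel₀ two_ne_zero ?_
  linear_combination 3 * hsq + 2 * ((m + 1)! : ℤ) * h3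

end Adjacent

/-- The second moment of the normalized autocorrelation of Eulerian numbers is
`(n+1)/6`:  `∑ᵢ i² (∑ₚ A(n,p) A(n,p-i)) / (∑ₚ A(n,p))² = (n+1)/6`.
(The sums over `i` and `p` run over all integers; all terms outside
`[-n, n]` vanish, so finite sums over `[-n, n]` suffice.) -/
theorem eulerian_autocorrelation_second_moment (n : ℕ) (hn : 2 ≤ n) :
    (∑ i ∈ Finset.Icc (-(n : ℤ)) (n : ℤ), (i : ℚ) ^ 2 *
        ∑ p ∈ Finset.Icc (-(n : ℤ)) (n : ℤ),
          (eulerianZ n p : ℚ) * (eulerianZ n (p - i) : ℚ)) /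
      (∑ p ∈ Finset.range n, (eulerian n p : ℚ)) ^ 2 = ((n : ℚ) + 1) / 6 := by
  obtain ⟨m, rfl⟩ : ∃ m, n = m + 1 := ⟨n - 1, by omega⟩
  have hmoment := congrArg (Int.cast : ℤ → ℚ)
    (six_mul_sum_sum_numAscents_sub_sq (m := m) (by omega))
  rw [autocorrelation_moment_eq_sum_sum_sq, ← Nat.cast_sum, sum_range_eulerian (by omega),
    div_eq_iff (by positivity)]
  push_cast at hmoment ⊢
  linarith
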